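/- arXiv:0804.3647 — 3 statements merged into one kernel-verified Lean document; each statement's English description precedes it below -/
import Mathlib

section
/- Let {x^k} be a sequence generated by Algorithm 3.1 with data M > 0 and x⁰. Suppose there is a real r > 0 such that M is a Lipschitz constant of f on the closed ball B(x⁰, r), and suppose the closed ball B(x⁰, r/2) contains a point of the topological interior of Q. Then the sequence {x^k} converges to some point x* with f(x*) ≤ 0 (i.e., x* ∈ Q). -/
open Filter Topology

noncomputable section

abbrev Euc (n : ℕ) := EuclideanSpace ℝ (Fin n)

/-- `ξ` is a subgradient of `g` at `x`. -/
def IsSubgradAt {n : ℕ} (g : Euc n → ℝ) (x ξ : Euc n) : Prop :=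
  ∀ y : Euc n, g x + (inner ℝ ξ (y - x) : ℝ) ≤ g y

/-- The envelope `f(x) = max_i f_i(x)` of finitely many functions. -/
def envl {n m : ℕ} [NeZero m] (f : Fin m → Euc n → ℝ) (x : Euc n) : ℝ :=
  Finset.univ.sup' Finset.univ_nonempty fun i => f i x

/-- The sequence `x` with relaxation parameters `lam` is generated by Algorithm 3.1
with data `M` for the family `f`. -/
def IsAlgSeq {n m : ℕ} [NeZero m] (f : Fin m → Euc n → ℝ) (M : ℝ)
    (x : ℕ → Euc n) (lam : ℕ → ℝ) : Prop :=
  ∀ k : ℕ, 0 ≤ lam k ∧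
    max 0 (envl f (x k)) ≤ lam k * M ^ 2 ∧
    lam k * M ^ 2 ≤ 2 * max 0 (envl f (x k)) ∧
    ∃ (w : Fin m → ℝ) (ξ : Fin m → Euc n),
      (∀ i, 0 ≤ w i) ∧ (∑ i, w i) = 1 ∧
      (∀ i, f i (x k) < envl f (x k) → w i = 0) ∧
      (∀ i, IsSubgradAt (f i) (x k) (ξ i)) ∧
      x (k + 1) = x k - lam k • ∑ i, w i • ξ i

/-! Fix a point `z` of the interior of `Q` strictly closer than `r / 2` to `x⁰`, with
`closedBall z ρ ⊆ Q`. Testing the subgradient `ν` of `f` at `x` against the point of that ball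
furthest along `ν` gives `f x + ρ‖ν‖ ≤ ⟪ν, x - z⟫`, and with the step-size rule this yields the
Fejér-type estimate `‖x^{k+1} - z‖² + 2ρ‖x^{k+1} - x^k‖ ≤ ‖x^k - z‖²`. It keeps the iterates in
the open ball `B(x⁰, r)`, where the Lipschitz bound forces `‖ν‖ ≤ M` (needed for the estimate
itself), and telescoping makes the step lengths summable, so `x^k` is Cauchy. Finally
`f⁺(x^k)² ≤ M² (r/2) ‖x^{k+1} - x^k‖ → 0`, so the limit lies in `Q`. -/

open Metric

section Sequences

variable {E : Type*} [SeminormedAddCommGroup E] {x : ℕ → E} {z : E} {c : ℝ}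

theorem norm_sub_le_of_sq_norm_sub_add_le (hc : 0 ≤ c)
    (h : ∀ k, ‖x k - z‖ ≤ ‖x 0 - z‖ →
      ‖x (k + 1) - z‖ ^ 2 + c * ‖x (k + 1) - x k‖ ≤ ‖x k - z‖ ^ 2) :
    ∀ k, ‖x k - z‖ ≤ ‖x 0 - z‖
  | 0 => le_rfl
  | k + 1 => by
    have ih := norm_sub_le_of_sq_norm_sub_add_le hc h k
    have hsq : ‖x (k + 1) - z‖ ^ 2 ≤ ‖x k - z‖ ^ 2 := by
      nlinarith [h k ih, norm_nonneg (x (k + 1) - x k)]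
    exact ((pow_le_pow_iff_left₀ (norm_nonneg _) (norm_nonneg _) two_ne_zero).1 hsq).trans ih

theorem summable_norm_sub_of_sq_norm_sub_add_le (hc : 0 < c)
    (h : ∀ k, ‖x (k + 1) - z‖ ^ 2 + c * ‖x (k + 1) - x k‖ ≤ ‖x k - z‖ ^ 2) :
    Summable fun k => ‖x (k + 1) - x k‖ := by
  have htelescope : ∀ N, ‖x N - z‖ ^ 2 + c * ∑ k ∈ Finset.range N, ‖x (k + 1) - x k‖ ≤
      ‖x 0 - z‖ ^ 2 := by
    intro N
    induction N with
    | zero => simp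
    | succ N ih => rw [Finset.sum_range_succ, mul_add]; linarith [h N]
  refine summable_of_sum_range_le (c := ‖x 0 - z‖ ^ 2 / c) (fun _ => norm_nonneg _) fun N => ?_
  rw [le_div_iff₀ hc]
  nlinarith [htelescope N, sq_nonneg ‖x N - z‖]

end Sequences

theorem exists_closedBall_subset_ball_of_mem_interior {E : Type*} [NormedAddCommGroup E]
    [NormedSpace ℝ E] {s : Set E} {x z : E} {R : ℝ} (hR : 0 < R) (hz : z ∈ closedBall x R)
    (hzs : z ∈ interior s) : ∃ y ∈ ball x R, ∃ ρ > 0, closedBall y ρ ⊆ s := by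
  rw [← closure_ball x hR.ne'] at hz
  obtain ⟨y, hys, hyx⟩ := mem_closure_iff_nhds.1 hz _ (isOpen_interior.mem_nhds hzs)
  obtain ⟨ρ, hρ, hρs⟩ := nhds_basis_closedBall.mem_iff.1 (isOpen_interior.mem_nhds hys)
  exact ⟨y, hyx, ρ, hρ, hρs.trans interior_subset⟩

theorem le_zero_of_sq_max_zero_le_of_tendsto {X : Type*} [TopologicalSpace X] {g : X → ℝ}
    {s : Set X} (hg : ContinuousOn g s) (hs : IsClosed s) {x : ℕ → X} {a : X}
    (hxs : ∀ k, x k ∈ s) (hx : Tendsto x atTop (𝓝 a)) {b : ℕ → ℝ}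
    (hb : Tendsto b atTop (𝓝 0)) (hgb : ∀ k, max 0 (g (x k)) ^ 2 ≤ b k) : g a ≤ 0 := by
  have hgx : Tendsto (fun k => g (x k)) atTop (𝓝 (g a)) :=
    (hg a (hs.mem_of_tendsto hx (.of_forall hxs))).tendsto.comp
      (tendsto_nhdsWithin_iff.2 ⟨hx, .of_forall hxs⟩)
  have hlim : max 0 (g a) ^ 2 ≤ 0 :=
    le_of_tendsto_of_tendsto' ((tendsto_const_nhds.max hgx).pow 2) hb hgb
  nlinarith [le_max_right 0 (g a)]

section Subgradients

variable {n : ℕ} {g : Euc n → ℝ} {x z ν : Euc n} {ρ lam M R : ℝ}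

theorem IsSubgradAt.norm_le {s : Set (Euc n)} {K : NNReal} (hν : IsSubgradAt g x ν)
    (hg : LipschitzOnWith K g s) (hs : s ∈ 𝓝 x) : ‖ν‖ ≤ K := by
  have hline : Tendsto (fun t : ℝ => x + t • ν) (𝓝[>] 0) (𝓝 x) := by
    have hcont : Continuous fun t : ℝ => x + t • ν := by fun_prop
    exact (hcont.tendsto' 0 x (by simp)).mono_left nhdsWithin_le_nhds
  obtain ⟨t, hts, ht⟩ := ((hline.eventually_mem hs).and self_mem_nhdsWithin).exists
  have hgrowth : t * ‖ν‖ ^ 2 ≤ t * (K * ‖ν‖) := by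
    have hsub := hν (x + t • ν)
    have hlip := (le_abs_self _).trans (hg.dist_le_mul _ hts x (mem_of_mem_nhds hs))
    rw [add_sub_cancel_left, real_inner_smul_right, real_inner_self_eq_norm_sq] at hsub
    rw [dist_eq_norm, add_sub_cancel_left, norm_smul,
      Real.norm_of_nonneg (le_of_lt ht)] at hlip
    linarith
  nlinarith [le_of_mul_le_mul_left hgrowth ht, norm_nonneg ν, K.coe_nonneg]

theorem IsSubgradAt.add_mul_norm_le_inner (hν : IsSubgradAt g x ν) (hρ : 0 ≤ ρ)
    (hQ : ∀ y ∈ closedBall z ρ, g y ≤ 0) : g x + ρ * ‖ν‖ ≤ inner ℝ ν (x - z) := by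
  rcases eq_or_ne ν 0 with rfl | hν0
  · simpa using (hν z).trans (hQ z (mem_closedBall_self hρ))
  have hnorm : 0 < ‖ν‖ := norm_pos_iff.2 hν0
  have hy : z + (ρ / ‖ν‖) • ν ∈ closedBall z ρ := by
    rw [mem_closedBall, dist_eq_norm, add_sub_cancel_left, norm_smul, Real.norm_of_nonneg
      (by positivity), div_mul_cancel₀ _ hnorm.ne']
  have h := (hν _).trans (hQ _ hy)
  rw [show z + (ρ / ‖ν‖) • ν - x = -(x - z) + (ρ / ‖ν‖) • ν by abel, inner_add_right,
    inner_neg_right, real_inner_smul_right, real_inner_self_eq_norm_sq] at h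
  field_simp at h
  nlinarith

theorem IsSubgradAt.norm_sub_smul_sub_sq_add_le (hν : IsSubgradAt g x ν) (hρ : 0 ≤ ρ)
    (hQ : ∀ y ∈ closedBall z ρ, g y ≤ 0) (hM : 0 < M) (hνM : ‖ν‖ ≤ M) (hlam : 0 ≤ lam)
    (hlamM : lam * M ^ 2 ≤ 2 * max 0 (g x)) :
    ‖x - lam • ν - z‖ ^ 2 + 2 * ρ * ‖lam • ν‖ ≤ ‖x - z‖ ^ 2 := by
  have hinner := mul_le_mul_of_nonneg_left (hν.add_mul_norm_le_inner hρ hQ) hlam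
  have hstep : lam ^ 2 * ‖ν‖ ^ 2 ≤ 2 * lam * g x := by
    rcases le_or_gt (g x) 0 with hgx | hgx
    · rw [max_eq_left hgx] at hlamM
      have : lam = 0 := le_antisymm (by nlinarith [sq_pos_of_pos hM]) hlam
      simp [this]
    · rw [max_eq_right hgx.le] at hlamM
      have : ‖ν‖ ^ 2 ≤ M ^ 2 := pow_le_pow_left₀ (norm_nonneg ν) hνM 2
      nlinarith [mul_le_mul_of_nonneg_left this (sq_nonneg lam)]
  rw [sub_right_comm, norm_sub_sq_real, norm_smul, Real.norm_of_nonneg hlam, inner_smul_right,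
    real_inner_comm]
  nlinarith

theorem IsSubgradAt.sq_max_zero_le (hν : IsSubgradAt g x ν) (hz : g z ≤ 0)
    (hR : ‖x - z‖ ≤ R) (hlam : 0 ≤ lam) (hlamM : max 0 (g x) ≤ lam * M ^ 2) :
    max 0 (g x) ^ 2 ≤ M ^ 2 * R * ‖lam • ν‖ := by
  have hgx : g x ≤ ‖ν‖ * R := by
    have h := (hν z).trans hz
    rw [← neg_sub, inner_neg_right] at h
    nlinarith [real_inner_le_norm ν (x - z), mul_le_mul_of_nonneg_left hR (norm_nonneg ν)]
  have hmax : max 0 (g x) ≤ ‖ν‖ * R :=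
    max_le (mul_nonneg (norm_nonneg ν) ((norm_nonneg _).trans hR)) hgx
  rw [norm_smul, Real.norm_of_nonneg hlam, sq]
  calc max 0 (g x) * max 0 (g x) ≤ (lam * M ^ 2) * (‖ν‖ * R) :=
        mul_le_mul hlamM hmax (le_max_left _ _) (by positivity)
    _ = M ^ 2 * R * (lam * ‖ν‖) := by ring

end Subgradients

section Algorithm

variable {n m : ℕ} [NeZero m] {f : Fin m → Euc n → ℝ}

theorem le_envl (f : Fin m → Euc n → ℝ) (x : Euc n) (i : Fin m) : f i x ≤ envl f x :=
  Finset.le_sup' (fun i => f i x) (Finset.mem_univ i)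

theorem isSubgradAt_envl {x : Euc n} {w : Fin m → ℝ} {ξ : Fin m → Euc n} (hw : ∀ i, 0 ≤ w i)
    (hw1 : ∑ i, w i = 1) (hact : ∀ i, f i x < envl f x → w i = 0)
    (hξ : ∀ i, IsSubgradAt (f i) x (ξ i)) : IsSubgradAt (envl f) x (∑ i, w i • ξ i) := by
  intro y
  have hterm : ∀ i, w i * (envl f x + inner ℝ (ξ i) (y - x)) ≤ w i * envl f y := by
    intro i
    rcases (le_envl f x i).eq_or_lt with hactive | hinactive
    · rw [← hactive]
      exact mul_le_mul_of_nonneg_left ((hξ i y).trans (le_envl f y i)) (hw i)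
    · simp [hact i hinactive]
  calc envl f x + inner ℝ (∑ i, w i • ξ i) (y - x)
      = ∑ i, w i * (envl f x + inner ℝ (ξ i) (y - x)) := by
        simp only [sum_inner, real_inner_smul_left, mul_add, Finset.sum_add_distrib,
          ← Finset.sum_mul, hw1, one_mul]
    _ ≤ ∑ i, w i * envl f y := Finset.sum_le_sum fun i _ => hterm i
    _ = envl f y := by rw [← Finset.sum_mul, hw1, one_mul]

theorem IsAlgSeq.step_estimates {M : ℝ} {x : ℕ → Euc n} {lam : ℕ → ℝ} (halg : IsAlgSeq f M x lam)
    (hM : 0 < M) {s : Set (Euc n)} (hLip : LipschitzOnWith M.toNNReal (envl f) s) (k : ℕ)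
    (hs : s ∈ 𝓝 (x k)) {z : Euc n} {ρ R : ℝ} (hρ : 0 ≤ ρ)
    (hQ : ∀ y ∈ closedBall z ρ, envl f y ≤ 0) (hR : ‖x k - z‖ ≤ R) :
    ‖x (k + 1) - z‖ ^ 2 + 2 * ρ * ‖x (k + 1) - x k‖ ≤ ‖x k - z‖ ^ 2 ∧
      max 0 (envl f (x k)) ^ 2 ≤ M ^ 2 * R * ‖x (k + 1) - x k‖ := by
  obtain ⟨hlam, hlamM, hlamM', w, ξ, hw, hw1, hact, hξ, hnext⟩ := halg k
  have hν := isSubgradAt_envl hw hw1 hact hξ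
  have hνM : ‖∑ i, w i • ξ i‖ ≤ M := by
    simpa [Real.coe_toNNReal _ hM.le] using hν.norm_le hLip hs
  rw [hnext, sub_sub_cancel_left, norm_neg]
  exact ⟨hν.norm_sub_smul_sub_sq_add_le hρ hQ hM hνM hlam hlamM',
    hν.sq_max_zero_le (hQ z (mem_closedBall_self hρ)) hR hlam hlamM⟩

end Algorithm

theorem stmt0_general
    {n m : ℕ} [NeZero m] (f : Fin m → Euc n → ℝ)
    (M : ℝ) (hM : 0 < M) (x : ℕ → Euc n) (lam : ℕ → ℝ)
    (halg : IsAlgSeq f M x lam) (x0 : Euc n) (hx0 : x 0 = x0)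
    (r : ℝ) (hr : 0 < r)
    (hLip : ∀ y z : Euc n, y ∈ Metric.closedBall x0 r → z ∈ Metric.closedBall x0 r →
      |envl f y - envl f z| ≤ M * ‖y - z‖)
    (hint : ∃ z : Euc n, z ∈ Metric.closedBall x0 (r / 2) ∧
      z ∈ interior {y : Euc n | envl f y ≤ 0}) :
    ∃ xs : Euc n, Tendsto x atTop (𝓝 xs) ∧ envl f xs ≤ 0 := by
  subst hx0
  have hLipOn : LipschitzOnWith M.toNNReal (envl f) (closedBall (x 0) r) :=
    LipschitzOnWith.of_dist_le' fun y hy z hz => by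
      simpa only [dist_eq_norm, Real.norm_eq_abs] using hLip y z hy hz
  obtain ⟨z0, hz0, hz0Q⟩ := hint
  obtain ⟨z, hz, ρ, hρ, hQ⟩ :=
    exists_closedBall_subset_ball_of_mem_interior (half_pos hr) hz0 hz0Q
  rw [mem_ball, dist_comm, dist_eq_norm] at hz
  have hnhds : ∀ k, ‖x k - z‖ ≤ ‖x 0 - z‖ → closedBall (x 0) r ∈ 𝓝 (x k) := fun k hk =>
    closedBall_mem_nhds_of_mem <| by
      rw [mem_ball, dist_eq_norm]
      linarith [norm_sub_le_norm_sub_add_norm_sub (x k) z (x 0), norm_sub_rev z (x 0)]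
  have hstep (k : ℕ) (hk : ‖x k - z‖ ≤ ‖x 0 - z‖) :
      ‖x (k + 1) - z‖ ^ 2 + 2 * ρ * ‖x (k + 1) - x k‖ ≤ ‖x k - z‖ ^ 2 ∧
        max 0 (envl f (x k)) ^ 2 ≤ M ^ 2 * (r / 2) * ‖x (k + 1) - x k‖ :=
    halg.step_estimates hM hLipOn k (hnhds k hk) hρ.le hQ (hk.trans hz.le)
  have hfejer := norm_sub_le_of_sq_norm_sub_add_le (by positivity) fun k hk => (hstep k hk).1
  have hsum := summable_norm_sub_of_sq_norm_sub_add_le (by positivity) fun k =>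
    (hstep k (hfejer k)).1
  obtain ⟨xs, hxs⟩ := cauchySeq_tendsto_of_complete <|
    cauchySeq_of_summable_dist (f := x) (by simpa only [dist_eq_norm_sub'] using hsum)
  exact ⟨xs, hxs, le_zero_of_sq_max_zero_le_of_tendsto hLipOn.continuousOn isClosed_closedBall
    (fun k => mem_of_mem_nhds (hnhds k (hfejer k))) hxs
    (by simpa using hsum.tendsto_atTop_zero.const_mul (M ^ 2 * (r / 2)))
    fun k => (hstep k (hfejer k)).2⟩

theorem stmt0
    {n m : ℕ} (hn : 0 < n) [NeZero m] (f : Fin m → Euc n → ℝ)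
    (hconv : ∀ i, ConvexOn ℝ Set.univ (f i))
    (M : ℝ) (hM : 0 < M) (x : ℕ → Euc n) (lam : ℕ → ℝ)
    (halg : IsAlgSeq f M x lam) (x0 : Euc n) (hx0 : x 0 = x0)
    (r : ℝ) (hr : 0 < r)
    (hLip : ∀ y z : Euc n, y ∈ Metric.closedBall x0 r → z ∈ Metric.closedBall x0 r →
      |envl f y - envl f z| ≤ M * ‖y - z‖)
    (hint : ∃ z : Euc n, z ∈ Metric.closedBall x0 (r / 2) ∧
      z ∈ interior {y : Euc n | envl f y ≤ 0}) :
    ∃ xs : Euc n, Tendsto x atTop (𝓝 xs) ∧ envl f xs ≤ 0 :=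
  stmt0_general f M hM x lam halg x0 hx0 r hr hLip hint
end
end

section
/- (Remark following Corollary 4.6.) Suppose the convex feasibility problem has no solution (f(x) > 0 for all x ∈ ℝⁿ). Let {x^k} be any sequence generated by Algorithm 3.1 (for arbitrary M > 0 and x⁰). If there is a strictly increasing sequence of indices {k_t} such that the subsequence {x^{k_t}} is bounded and x^{k_t+1} − x^{k_t} → 0 as t → ∞, then every accumulation point of {x^{k_t}} is a global minimizer of f (strict convexity of f is not needed here). -/
open Filter Topology

noncomputable section

/-!
Each step of the algorithm moves along `-ν^k`, where `ν^k` is a subgradient of the envelope `f`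
at `x^k`, with a step length satisfying `λ_k M² ≥ max(0, f(x^k))`. Hence for every `y`,
`max(0, f(x^k)) · (f(x^k) - f(y)) ≤ M² · max(0, ⟪x^{k+1} - x^k, y - x^k⟫)`.
Along a subsequence with `x^{k_t} → x*` and `x^{k_t+1} - x^{k_t} → 0` the right side tends to `0`,
so `f(x*) · (f(x*) - f(y)) ≤ 0`, and `f(x*) > 0` gives `f(x*) ≤ f(y)`.
-/

section Envelope

variable {n m : ℕ} [NeZero m] {f : Fin m → Euc n → ℝ}

theorem continuous_envl (hconv : ∀ i, ConvexOn ℝ Set.univ (f i)) : Continuous (envl f) :=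
  Continuous.finset_sup'_apply Finset.univ_nonempty fun i _ =>
    continuousOn_univ.mp ((hconv i).continuousOn isOpen_univ)

theorem isSubgradAt_envl_sum {x : Euc n} {w : Fin m → ℝ} {ξ : Fin m → Euc n}
    (hw0 : ∀ i, 0 ≤ w i) (hw1 : ∑ i, w i = 1)
    (hactive : ∀ i, f i x < envl f x → w i = 0) (hξ : ∀ i, IsSubgradAt (f i) x (ξ i)) :
    IsSubgradAt (envl f) x (∑ i, w i • ξ i) := by
  intro y
  have hpiece : ∀ i, w i * (envl f x + inner ℝ (ξ i) (y - x)) ≤ w i * envl f y := by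
    intro i
    have hfx : w i * envl f x = w i * f i x := by
      rcases (Finset.le_sup' (fun j => f j x) (Finset.mem_univ i)).lt_or_eq with h | h
      · rw [hactive i h, zero_mul, zero_mul]
      · exact congrArg (w i * ·) h.symm
    rw [mul_add, hfx, ← mul_add]
    exact mul_le_mul_of_nonneg_left
      ((hξ i y).trans (Finset.le_sup' (fun j => f j y) (Finset.mem_univ i))) (hw0 i)
  calc envl f x + inner ℝ (∑ i, w i • ξ i) (y - x)
      = ∑ i, w i * (envl f x + inner ℝ (ξ i) (y - x)) := by
        simp only [mul_add, Finset.sum_add_distrib, ← Finset.sum_mul, hw1, one_mul, sum_inner,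
          real_inner_smul_left]
    _ ≤ ∑ i, w i * envl f y := Finset.sum_le_sum fun i _ => hpiece i
    _ = envl f y := by rw [← Finset.sum_mul, hw1, one_mul]

end Envelope

namespace IsAlgSeq

variable {n m : ℕ} [NeZero m] {f : Fin m → Euc n → ℝ} {M : ℝ} {x : ℕ → Euc n} {lam : ℕ → ℝ}

theorem lam_mul_sub_le_inner (halg : IsAlgSeq f M x lam) (k : ℕ) (y : Euc n) :
    lam k * (envl f (x k) - envl f y) ≤ inner ℝ (x (k + 1) - x k) (y - x k) := by
  obtain ⟨hlam, -, -, w, ξ, hw0, hw1, hactive, hξ, hstep⟩ := halg k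
  have hsub := isSubgradAt_envl_sum hw0 hw1 hactive hξ y
  have hdiff : x (k + 1) - x k = -(lam k • ∑ i, w i • ξ i) := by rw [hstep]; abel
  rw [hdiff, inner_neg_left, real_inner_smul_left]
  nlinarith [mul_le_mul_of_nonneg_left hsub hlam]

/-- The `max`es keep this valid whatever the signs of `f(x^k)` and `f(x^k) - f(y)`. -/
theorem max_zero_envl_mul_sub_le (halg : IsAlgSeq f M x lam) (k : ℕ) (y : Euc n) :
    max 0 (envl f (x k)) * (envl f (x k) - envl f y)
      ≤ M ^ 2 * max 0 (inner ℝ (x (k + 1) - x k) (y - x k)) := by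
  obtain ⟨-, hlow, -⟩ := halg k
  have hstep := halg.lam_mul_sub_le_inner k y
  rcases le_or_gt 0 (envl f (x k) - envl f y) with hd | hd
  · calc max 0 (envl f (x k)) * (envl f (x k) - envl f y)
        ≤ lam k * M ^ 2 * (envl f (x k) - envl f y) := mul_le_mul_of_nonneg_right hlow hd
      _ ≤ M ^ 2 * max 0 (inner ℝ (x (k + 1) - x k) (y - x k)) := by
        nlinarith [sq_nonneg M, le_max_right 0 (inner ℝ (x (k + 1) - x k) (y - x k))]
  · exact (mul_nonpos_of_nonneg_of_nonpos (le_max_left _ _) hd.le).trans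
      (mul_nonneg (sq_nonneg M) (le_max_left _ _))

theorem max_zero_envl_mul_sub_nonpos_of_tendsto (halg : IsAlgSeq f M x lam)
    (hcont : Continuous (envl f)) {s : ℕ → ℕ} {xs : Euc n}
    (hlim : Tendsto (fun t => x (s t)) atTop (𝓝 xs))
    (hdiff : Tendsto (fun t => x (s t + 1) - x (s t)) atTop (𝓝 0)) (y : Euc n) :
    max 0 (envl f xs) * (envl f xs - envl f y) ≤ 0 := by
  have hf : Tendsto (fun t => envl f (x (s t))) atTop (𝓝 (envl f xs)) :=
    (hcont.tendsto xs).comp hlim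
  have hinner : Tendsto (fun t => inner ℝ (x (s t + 1) - x (s t)) (y - x (s t))) atTop
      (𝓝 (inner ℝ (0 : Euc n) (y - xs))) :=
    hdiff.inner (tendsto_const_nhds.sub hlim)
  rw [inner_zero_left] at hinner
  have hrhs := hinner.max_right.const_mul (M ^ 2)
  rw [mul_zero] at hrhs
  exact le_of_tendsto_of_tendsto' ((tendsto_const_nhds.max hf).mul (hf.sub_const _)) hrhs
    fun t => halg.max_zero_envl_mul_sub_le (s t) y

end IsAlgSeq

theorem stmt10_general
    {n m : ℕ} [NeZero m] (f : Fin m → Euc n → ℝ)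
    (hconv : ∀ i, ConvexOn ℝ Set.univ (f i))
    (M : ℝ) (x : ℕ → Euc n) (lam : ℕ → ℝ)
    (halg : IsAlgSeq f M x lam)
    (hnosol : ∀ y : Euc n, 0 < envl f y)
    (kt : ℕ → ℕ)
    (hdiff : Tendsto (fun t => x (kt t + 1) - x (kt t)) atTop (𝓝 0)) :
    ∀ xs : Euc n,
      (∃ φ : ℕ → ℕ, StrictMono φ ∧ Tendsto (fun t => x (kt (φ t))) atTop (𝓝 xs)) →
      ∀ y : Euc n, envl f xs ≤ envl f y := by
  rintro xs ⟨φ, hφ, hlim⟩ y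
  have h := halg.max_zero_envl_mul_sub_nonpos_of_tendsto (continuous_envl hconv) hlim
    (hdiff.comp hφ.tendsto_atTop) y
  rw [max_eq_right (hnosol xs).le] at h
  exact sub_nonpos.mp (nonpos_of_mul_nonpos_right h (hnosol xs))

theorem stmt10
    {n m : ℕ} (hn : 0 < n) [NeZero m] (f : Fin m → Euc n → ℝ)
    (hconv : ∀ i, ConvexOn ℝ Set.univ (f i))
    (M : ℝ) (hM : 0 < M) (x : ℕ → Euc n) (lam : ℕ → ℝ)
    (halg : IsAlgSeq f M x lam) (x0 : Euc n) (hx0 : x 0 = x0)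
    (hnosol : ∀ y : Euc n, 0 < envl f y)
    (kt : ℕ → ℕ) (hkt : StrictMono kt)
    (hbdd : ∃ C : ℝ, ∀ t : ℕ, ‖x (kt t)‖ ≤ C)
    (hdiff : Tendsto (fun t => x (kt t + 1) - x (kt t)) atTop (𝓝 0)) :
    ∀ xs : Euc n,
      (∃ φ : ℕ → ℕ, StrictMono φ ∧ Tendsto (fun t => x (kt (φ t))) atTop (𝓝 xs)) →
      ∀ y : Euc n, envl f xs ≤ envl f y :=
  stmt10_general f hconv M x lam halg hnosol kt hdiff
end
end

section
/- (Remark 4.7, example.) Define the real sequence {x_k} by x_0 = 0 and x_{k+1} = x_k + (3/2)·exp(−2·x_k) for all k ≥ 0. Then exp(−x_k) → 0 as k → ∞ (equivalently, x_k → +∞), even though the inequality exp(−x) ≤ 0 has no real solution. (This sequence is the one generated by Algorithm 3.1 for m = n = 1, f₁(x) = e^{−x}, x⁰ = 0, M = 1, λ_k = (3/2)·f(x^k).) -/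
open Filter Topology

noncomputable section

/-- The orbit is increasing, and a finite limit would be a fixed point of `g`. -/
theorem tendsto_atTop_of_lt_map {α : Type*} [ConditionallyCompleteLinearOrder α]
    [TopologicalSpace α] [OrderTopology α] {g : α → α} (hg : Continuous g) (hlt : ∀ y, y < g y)
    {x : ℕ → α} (hx : ∀ k, x (k + 1) = g (x k)) : Tendsto x atTop atTop := by
  have hmono : Monotone x := monotone_nat_of_le_succ fun k => hx k ▸ (hlt (x k)).le
  rcases tendsto_atTop_of_monotone hmono with htop | ⟨l, hl⟩
  · exact htop
  have hsucc : Tendsto (fun k => x (k + 1)) atTop (𝓝 (g l)) := by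
    simp only [hx]
    exact (hg.tendsto l).comp hl
  exact absurd (tendsto_nhds_unique (hl.comp (tendsto_add_atTop_nat 1)) hsucc) (hlt l).ne

theorem stmt12_general
    (x : ℕ → ℝ)
    (hstep : ∀ k : ℕ, x (k + 1) = x k + (3 / 2) * Real.exp (-2 * x k)) :
    Tendsto (fun k => Real.exp (-(x k))) atTop (𝓝 0) ∧
    Tendsto x atTop atTop ∧
    ∀ y : ℝ, ¬ Real.exp (-y) ≤ 0 := by
  have htop : Tendsto x atTop atTop :=
    tendsto_atTop_of_lt_map (g := fun y => y + (3 / 2) * Real.exp (-2 * y)) (by fun_prop)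
      (fun y => lt_add_of_pos_right y (by positivity)) hstep
  exact ⟨Real.tendsto_exp_neg_atTop_nhds_zero.comp htop, htop,
    fun y => not_le.mpr (Real.exp_pos _)⟩

theorem stmt12
    (x : ℕ → ℝ) (h0 : x 0 = 0)
    (hstep : ∀ k : ℕ, x (k + 1) = x k + (3 / 2) * Real.exp (-2 * x k)) :
    Tendsto (fun k => Real.exp (-(x k))) atTop (𝓝 0) ∧
    Tendsto x atTop atTop ∧
    ∀ y : ℝ, ¬ Real.exp (-y) ≤ 0 :=
  stmt12_general x hstep
end
end
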